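/- (Theorem 2, forward direction for infima.) Let the partition encoded by π with matrices L, L̄ be a control equivalence for A ∈ ℝ^{N×N}, let B have unit-vector columns given by an injective driver map d, let m ≤ M componentwise, and let F, R be costs constant on the partition with induced reduced costs F̂, R̂. Then for every x0 ∈ ℝ^N and every T ≥ 0, V^inf(x0,T) = V̂^inf(L·x0,T). -/

import Mathlib

open Matrix MeasureTheory

/-- Aggregation matrix of the partition encoded by `π`. -/
noncomputable def aggL {N n : ℕ} (π : Fin N → Fin n) : Matrix (Fin n) (Fin N) ℝ :=
  fun i j => if π j = i then 1 else 0

/-- Averaging matrix of the partition encoded by `π`. -/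
noncomputable def avgL {N n : ℕ} (π : Fin N → Fin n) : Matrix (Fin N) (Fin n) ℝ :=
  fun j i => if π j = i then
    (1 : ℝ) / (Finset.univ.filter (fun j' : Fin N => π j' = i)).card else 0

/-- Reduced bound `m̂ i = Σ_{l : π(d l) = i} m l`. -/
noncomputable def redBound {N n K : ℕ} (π : Fin N → Fin n) (d : Fin K → Fin N)
    (m : Fin K → ℝ) : Fin n → ℝ :=
  fun i => ∑ l ∈ Finset.univ.filter (fun l : Fin K => π (d l) = i), m l

/-- The set of cost values `J_u(x0, T)` attained by admissible pairs `(u, x)` from `x0`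
(with integrable running cost) at horizon `T`. -/
def costSet {N K : ℕ} (A : Matrix (Fin N) (Fin N) ℝ) (B : Matrix (Fin N) (Fin K) ℝ)
    (m M : Fin K → ℝ) (F : (Fin N → ℝ) → ℝ) (R : ℝ → (Fin N → ℝ) → (Fin K → ℝ) → ℝ)
    (x0 : Fin N → ℝ) (T : ℝ) : Set ℝ :=
  { c | ∃ (u : ℝ → Fin K → ℝ) (x : ℝ → Fin N → ℝ),
      Measurable u ∧ (∀ t : ℝ, ∀ l : Fin K, m l ≤ u t l ∧ u t l ≤ M l) ∧
      Continuous x ∧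
      (∀ t : ℝ, 0 ≤ t →
        x t = x0 + ∫ s in (0:ℝ)..t, (A.mulVec (x s) + B.mulVec (u s))) ∧
      IntervalIntegrable (fun t => R t (x t) (u t)) volume 0 T ∧
      c = F (x T) + ∫ t in (0:ℝ)..T, R t (x t) (u t) }

/-- The set of reduced cost values `Ĵ_û(ẑ0, T)` attained by reduced admissible pairs
`(û, ẑ)` from `ẑ0` (with integrable running cost) at horizon `T`. -/
def redCostSet {n : ℕ} (Ahat : Matrix (Fin n) (Fin n) ℝ) (mhat Mhat : Fin n → ℝ)
    (Fhat : (Fin n → ℝ) → ℝ) (Rhat : ℝ → (Fin n → ℝ) → (Fin n → ℝ) → ℝ)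
    (z0 : Fin n → ℝ) (T : ℝ) : Set ℝ :=
  { c | ∃ (uhat : ℝ → Fin n → ℝ) (zhat : ℝ → Fin n → ℝ),
      Measurable uhat ∧ (∀ t : ℝ, ∀ i : Fin n, mhat i ≤ uhat t i ∧ uhat t i ≤ Mhat i) ∧
      Continuous zhat ∧
      (∀ t : ℝ, 0 ≤ t →
        zhat t = z0 + ∫ s in (0:ℝ)..t, (Ahat.mulVec (zhat s) + uhat s)) ∧
      IntervalIntegrable (fun t => Rhat t (zhat t) (uhat t)) volume 0 T ∧
      c = Fhat (zhat T) + ∫ t in (0:ℝ)..T, Rhat t (zhat t) (uhat t) }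

/-!
The two cost sets coincide. Aggregating an admissible pair `(u, x)` gives the reduced pair
`(L B u, L x)`: the control-equivalence identity `L A = Â L` turns the integral equation of `x`
into that of `L x`, and the costs factor through `L`. Conversely, a reduced control `û` is lifted
by placing every driver of block `i` at the same relative position `θᵢ ∈ [0, 1]` between `m` and
`M` as `ûᵢ` between `m̂ᵢ` and `M̂ᵢ`; the trajectory `x` driven by this lift exists by variation of
constants, and `L x = ẑ` by uniqueness for the reduced linear equation.
-/

open Set

section MildSolutions

variable {E F : Type*} [NormedAddCommGroup E] [NormedSpace ℝ E]
  [NormedAddCommGroup F] [NormedSpace ℝ F]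

def IsMildSolution (A : E →L[ℝ] E) (f : ℝ → E) (x₀ : E) (x : ℝ → E) : Prop :=
  Continuous x ∧ ∀ t, 0 ≤ t → x t = x₀ + ∫ s in (0:ℝ)..t, (A (x s) + f s)

variable [CompleteSpace E]

/-- Variation of constants: `z t = exp (t A) (x₀ + ∫₀ᵗ exp (-s A) (h s) ds)`. -/
theorem exists_hasDerivAt_linear_ode (A : E →L[ℝ] E) {h : ℝ → E}
    (hh : Continuous h) (x₀ : E) :
    ∃ z : ℝ → E, z 0 = x₀ ∧ ∀ t, HasDerivAt z (A (z t) + h t) t := by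
  let _ : NormedAlgebra ℚ (E →L[ℝ] E) := NormedAlgebra.restrictScalars ℚ ℝ _
  set P : ℝ → E →L[ℝ] E := fun t => NormedSpace.exp (t • A)
  have hP : Continuous P := NormedSpace.exp_continuous.comp (continuous_id.smul continuous_const)
  have hP_deriv (t : ℝ) : HasDerivAt P (A * P t) t := hasDerivAt_exp_smul_const' A t
  have hP_neg (t : ℝ) : P t * P (-t) = 1 := by
    rw [← NormedSpace.exp_add_of_commute ((Commute.refl A).smul_left t |>.smul_right (-t)),
      ← add_smul, add_neg_cancel, zero_smul, NormedSpace.exp_zero]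
  have hg : Continuous fun s => P (-s) (h s) := (hP.comp continuous_neg).clm_apply hh
  refine ⟨fun t => P t (x₀ + ∫ s in (0:ℝ)..t, P (-s) (h s)), by simp [P], fun t => ?_⟩
  have hy : HasDerivAt (fun t => x₀ + ∫ s in (0:ℝ)..t, P (-s) (h s)) (P (-t) (h t)) t :=
    (intervalIntegral.integral_hasDerivAt_right (hg.intervalIntegrable _ _)
      hg.aestronglyMeasurable.stronglyMeasurableAtFilter hg.continuousAt).const_add x₀
  convert (hP_deriv t).clm_apply hy using 1
  simp only [mul_apply_eq_comp, ← mul_apply_eq_comp (P t) (P (-t)), hP_neg, one_apply_eq_self]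

theorem exists_isMildSolution (A : E →L[ℝ] E) {f : ℝ → E}
    (hf : ∀ a b, IntervalIntegrable f volume a b) (x₀ : E) :
    ∃ x, IsMildSolution A f x₀ x := by
  set g : ℝ → E := fun t => ∫ s in (0:ℝ)..t, f s
  have hg : Continuous g := intervalIntegral.continuous_primitive hf 0
  -- `x = z + g` with `g` the primitive of `f`, where `z` solves an ODE with continuous forcing
  obtain ⟨z, hz0, hz⟩ :=
    exists_hasDerivAt_linear_ode A (h := fun s => A (g s)) (A.continuous.comp hg) x₀
  have hzc : Continuous z := continuous_iff_continuousAt.2 fun t => (hz t).continuousAt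
  have hz' : Continuous fun s => A (z s) + A (g s) :=
    (A.continuous.comp hzc).add (A.continuous.comp hg)
  refine ⟨z + g, hzc.add hg, fun t _ => ?_⟩
  have hz_int : ∫ s in (0:ℝ)..t, (A (z s) + A (g s)) = z t - x₀ := by
    rw [intervalIntegral.integral_eq_sub_of_hasDerivAt (fun s _ => hz s)
      (hz'.intervalIntegrable _ _), hz0]
  have hsplit : ∫ s in (0:ℝ)..t, (A ((z + g) s) + f s)
      = (∫ s in (0:ℝ)..t, (A (z s) + A (g s))) + g t := by
    rw [← intervalIntegral.integral_add (hz'.intervalIntegrable _ _) (hf 0 t)]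
    simp only [Pi.add_apply, map_add, add_assoc]
  rw [hsplit, hz_int, Pi.add_apply]
  abel

theorem eq_zero_of_forall_eq_integral (A : E →L[ℝ] E) {w : ℝ → E} (hw : Continuous w)
    (h : ∀ t, 0 ≤ t → w t = ∫ s in (0:ℝ)..t, A (w s)) : ∀ t, 0 ≤ t → w t = 0 := by
  have hAw : Continuous fun s => A (w s) := A.continuous.comp hw
  have hderiv : ∀ s, 0 ≤ s → HasDerivWithinAt w (A (w s)) (Ici s) s := fun s hs =>
    (intervalIntegral.integral_hasDerivAt_right (hAw.intervalIntegrable _ _)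
      hAw.aestronglyMeasurable.stronglyMeasurableAtFilter hAw.continuousAt).hasDerivWithinAt.congr
      (fun r hr => h r (hs.trans hr)) (h s hs)
  intro t ht
  have := ODE_solution_unique (v := fun _ => A) (g := fun _ => 0) (a := 0) (b := t)
    (fun _ => A.lipschitz) hw.continuousOn (fun s hs => hderiv s hs.1)
    continuousOn_const (fun s _ => by simpa using hasDerivWithinAt_const s (Ici s) (0 : E))
    (by simpa using h 0 le_rfl)
  exact this ⟨ht, le_rfl⟩

theorem IsMildSolution.eqOn {A : E →L[ℝ] E} {f : ℝ → E} {x₀ : E} {x y : ℝ → E}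
    (hf : ∀ t, IntervalIntegrable f volume 0 t)
    (hx : IsMildSolution A f x₀ x) (hy : IsMildSolution A f x₀ y) :
    EqOn x y (Ici 0) := by
  have hint (z : ℝ → E) (hz : Continuous z) (t : ℝ) :
      IntervalIntegrable (fun s => A (z s) + f s) volume 0 t :=
    ((A.continuous.comp hz).intervalIntegrable _ _).add (hf t)
  intro t ht
  refine sub_eq_zero.1 (eq_zero_of_forall_eq_integral A (hx.1.sub hy.1) (fun t ht => ?_) t ht)
  rw [Pi.sub_apply, hx.2 t ht, hy.2 t ht, add_sub_add_left_eq_sub,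
    ← intervalIntegral.integral_sub (hint x hx.1 t) (hint y hy.1 t)]
  simp only [Pi.sub_apply, map_sub, add_sub_add_right_eq_sub]

theorem IsMildSolution.map [CompleteSpace F] {A : E →L[ℝ] E} {f : ℝ → E} {x₀ : E} {x : ℝ → E}
    (L : E →L[ℝ] F) {A' : F →L[ℝ] F} (hLA : L ∘L A = A' ∘L L)
    (hf : ∀ t, IntervalIntegrable f volume 0 t) (hx : IsMildSolution A f x₀ x) :
    IsMildSolution A' (fun s => L (f s)) (L x₀) (fun s => L (x s)) := by
  refine ⟨L.continuous.comp hx.1, fun t ht => ?_⟩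
  beta_reduce
  have hAx : Continuous fun s => A (x s) := A.continuous.comp hx.1
  rw [hx.2 t ht, map_add,
    ← L.intervalIntegral_comp_comm ((hAx.intervalIntegrable _ _).add (hf t))]
  simp only [map_add, ← ContinuousLinearMap.comp_apply, hLA]

end MildSolutions

section Matrices

variable {ι κ : Type*} [Fintype κ]

noncomputable abbrev mulVecCLM (A : Matrix ι κ ℝ) : (κ → ℝ) →L[ℝ] (ι → ℝ) :=
  LinearMap.toContinuousLinearMap A.mulVecLin

theorem mulVecCLM_apply (A : Matrix ι κ ℝ) (v : κ → ℝ) : mulVecCLM A v = A *ᵥ v := rfl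

theorem mulVecCLM_comp_of_mul_eq [Fintype ι] {L : Matrix κ ι ℝ} {A : Matrix ι ι ℝ}
    {A' : Matrix κ κ ℝ} (h : L * A = A' * L) :
    mulVecCLM L ∘L mulVecCLM A = mulVecCLM A' ∘L mulVecCLM L := by
  ext1 v
  simp only [ContinuousLinearMap.comp_apply, mulVecCLM_apply, mulVec_mulVec, h]

theorem IntervalIntegrable.matrix_mulVec [Fintype ι] (A : Matrix ι κ ℝ) {f : ℝ → κ → ℝ}
    {a b : ℝ} (hf : IntervalIntegrable f volume a b) :
    IntervalIntegrable (fun s => A *ᵥ f s) volume a b :=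
  ⟨(mulVecCLM A).integrable_comp hf.1, (mulVecCLM A).integrable_comp hf.2⟩

theorem intervalIntegrable_of_measurable_of_bounds [Fintype ι] {f : ℝ → ι → ℝ}
    {lo hi : ι → ℝ} (hf : Measurable f) (hb : ∀ t i, lo i ≤ f t i ∧ f t i ≤ hi i) (a b : ℝ) :
    IntervalIntegrable f volume a b := by
  obtain ⟨C, hC⟩ := (Metric.isBounded_Icc lo hi).exists_norm_le
  refine (intervalIntegrable_const (c := C)).mono_fun hf.aestronglyMeasurable
    (Filter.Eventually.of_forall fun t => ?_)
  exact (hC _ ⟨fun i => (hb t i).1, fun i => (hb t i).2⟩).trans (le_abs_self C)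

end Matrices

section Partition

variable {N n K : ℕ} (π : Fin N → Fin n) (d : Fin K → Fin N)

theorem aggL_mul_mulVec {B : Matrix (Fin N) (Fin K) ℝ}
    (hB : ∀ j l, B j l = if j = d l then 1 else 0) (v : Fin K → ℝ) :
    (aggL π * B) *ᵥ v = redBound π d v := by
  ext i
  have hLB : ∀ l, (aggL π * B) i l = if π (d l) = i then 1 else 0 := fun l => by
    simp [mul_apply, aggL, hB]
  simp [mulVec, dotProduct, hLB, redBound, Finset.sum_filter]

theorem redBound_mono {m M : Fin K → ℝ} (h : ∀ l, m l ≤ M l) (i : Fin n) :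
    redBound π d m i ≤ redBound π d M i :=
  Finset.sum_le_sum fun l _ => h l

/-- On blocks with `redBound π d m i = redBound π d M i` the quotient is `x / 0 = 0`, which is
the right value there since then `w i = redBound π d m i`. -/
noncomputable def liftControl (m M : Fin K → ℝ) (w : Fin n → ℝ) : Fin K → ℝ :=
  fun l => m l + (w (π (d l)) - redBound π d m (π (d l))) /
    (redBound π d M (π (d l)) - redBound π d m (π (d l))) * (M l - m l)

theorem continuous_liftControl (m M : Fin K → ℝ) : Continuous (liftControl π d m M) :=
  continuous_pi fun _ => continuous_const.add
    ((((continuous_apply _).sub continuous_const).div_const _).mul continuous_const)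

variable {π d} {m M : Fin K → ℝ} {w : Fin n → ℝ}

theorem liftControl_mem (hmM : ∀ l, m l ≤ M l)
    (hw : ∀ i, redBound π d m i ≤ w i ∧ w i ≤ redBound π d M i) (l : Fin K) :
    m l ≤ liftControl π d m M w l ∧ liftControl π d m M w l ≤ M l := by
  set i := π (d l)
  have hθ₀ : 0 ≤ (w i - redBound π d m i) / (redBound π d M i - redBound π d m i) :=
    div_nonneg (sub_nonneg.2 (hw i).1) (sub_nonneg.2 (redBound_mono π d hmM i))
  have hθ₁ : (w i - redBound π d m i) / (redBound π d M i - redBound π d m i) ≤ 1 :=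
    div_le_one_of_le₀ (sub_le_sub_right (hw i).2 _) (sub_nonneg.2 (redBound_mono π d hmM i))
  have hml := sub_nonneg.2 (hmM l)
  constructor <;> simp only [liftControl] <;> nlinarith

theorem redBound_liftControl (hw : ∀ i, redBound π d m i ≤ w i ∧ w i ≤ redBound π d M i) :
    redBound π d (liftControl π d m M w) = w := by
  ext i
  set θ := (w i - redBound π d m i) / (redBound π d M i - redBound π d m i)
  have hsum : redBound π d (liftControl π d m M w) i =
      redBound π d m i + θ * (redBound π d M i - redBound π d m i) := by
    calc redBound π d (liftControl π d m M w) i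
        = ∑ l ∈ Finset.univ.filter (fun l => π (d l) = i), (m l + θ * (M l - m l)) :=
          Finset.sum_congr rfl fun l hl => by
            simp only [liftControl, (Finset.mem_filter.1 hl).2, θ]
      _ = _ := by
          rw [Finset.sum_add_distrib, ← Finset.mul_sum, Finset.sum_sub_distrib]; rfl
  rcases eq_or_ne (redBound π d M i - redBound π d m i) 0 with h | h
  · rw [hsum, h, mul_zero, add_zero]
    linarith [hw i, sub_eq_zero.1 h]
  · rw [hsum, div_mul_cancel₀ _ h, add_sub_cancel]

end Partition

section CostSets

variable {N n K : ℕ} {π : Fin N → Fin n} {A : Matrix (Fin N) (Fin N) ℝ} {d : Fin K → Fin N}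
  {B : Matrix (Fin N) (Fin K) ℝ} {m M : Fin K → ℝ} {F : (Fin N → ℝ) → ℝ}
  {R : ℝ → (Fin N → ℝ) → (Fin K → ℝ) → ℝ} {Fhat : (Fin n → ℝ) → ℝ}
  {Rhat : ℝ → (Fin n → ℝ) → (Fin n → ℝ) → ℝ}

theorem costSet_subset_redCostSet (hCE : aggL π * A = aggL π * A * avgL π * aggL π)
    (hB : ∀ j l, B j l = if j = d l then 1 else 0)
    (hFhat : ∀ x, F x = Fhat (aggL π *ᵥ x))
    (hRhat : ∀ t x v, R t x v = Rhat t (aggL π *ᵥ x) ((aggL π * B) *ᵥ v))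
    (x₀ : Fin N → ℝ) (T : ℝ) :
    costSet A B m M F R x₀ T ⊆
      redCostSet (aggL π * A * avgL π) (redBound π d m) (redBound π d M) Fhat Rhat
        (aggL π *ᵥ x₀) T := by
  rintro c ⟨u, x, hu, hub, hx, hxe, hR, rfl⟩
  have hBu (t : ℝ) : IntervalIntegrable (fun s => B *ᵥ u s) volume 0 t :=
    (intervalIntegrable_of_measurable_of_bounds hu hub 0 t).matrix_mulVec B
  have hsol : IsMildSolution (mulVecCLM A) (fun s => B *ᵥ u s) x₀ x := ⟨hx, hxe⟩
  have hLx := hsol.map (mulVecCLM (aggL π)) (mulVecCLM_comp_of_mul_eq hCE) hBu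
  refine ⟨fun t => (aggL π * B) *ᵥ u t, fun t => aggL π *ᵥ x t,
    (mulVecCLM _).continuous.measurable.comp hu, fun t i => ?_, hLx.1, ?_, ?_, ?_⟩
  · beta_reduce
    rw [aggL_mul_mulVec π d hB]
    exact ⟨redBound_mono π d (fun l => (hub t l).1) i,
      redBound_mono π d (fun l => (hub t l).2) i⟩
  · simpa only [mulVecCLM_apply, mulVec_mulVec] using hLx.2
  · simpa only [hRhat] using hR
  · simp only [hFhat, hRhat]

theorem redCostSet_subset_costSet (hCE : aggL π * A = aggL π * A * avgL π * aggL π)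
    (hB : ∀ j l, B j l = if j = d l then 1 else 0) (hmM : ∀ l, m l ≤ M l)
    (hFhat : ∀ x, F x = Fhat (aggL π *ᵥ x))
    (hRhat : ∀ t x v, R t x v = Rhat t (aggL π *ᵥ x) ((aggL π * B) *ᵥ v))
    (x₀ : Fin N → ℝ) {T : ℝ} (hT : 0 ≤ T) :
    redCostSet (aggL π * A * avgL π) (redBound π d m) (redBound π d M) Fhat Rhat
        (aggL π *ᵥ x₀) T ⊆ costSet A B m M F R x₀ T := by
  rintro c ⟨uhat, zhat, huhat, huhatb, hzhat, hzhate, hR, rfl⟩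
  set u : ℝ → Fin K → ℝ := fun t => liftControl π d m M (uhat t)
  have hu : Measurable u := (continuous_liftControl π d m M).measurable.comp huhat
  have hub (t : ℝ) (l : Fin K) : m l ≤ u t l ∧ u t l ≤ M l :=
    liftControl_mem hmM (huhatb t) l
  have hLBu (t : ℝ) : (aggL π * B) *ᵥ u t = uhat t := by
    rw [aggL_mul_mulVec π d hB, redBound_liftControl (huhatb t)]
  obtain ⟨x, hx⟩ := exists_isMildSolution (mulVecCLM A)
    (fun a b => (intervalIntegrable_of_measurable_of_bounds hu hub a b).matrix_mulVec B) x₀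
  have hLx : EqOn (fun t => aggL π *ᵥ x t) zhat (Ici 0) := by
    have hzsol : IsMildSolution (mulVecCLM (aggL π * A * avgL π)) uhat (aggL π *ᵥ x₀) zhat :=
      ⟨hzhat, hzhate⟩
    refine IsMildSolution.eqOn (intervalIntegrable_of_measurable_of_bounds huhat huhatb 0) ?_
      hzsol
    simpa only [mulVecCLM_apply, mulVec_mulVec, hLBu] using
      hx.map (mulVecCLM (aggL π)) (mulVecCLM_comp_of_mul_eq hCE)
        fun t => (intervalIntegrable_of_measurable_of_bounds hu hub 0 t).matrix_mulVec B
  have hRx : EqOn (fun t => R t (x t) (u t)) (fun t => Rhat t (zhat t) (uhat t)) (Ici 0) :=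
    fun t ht => by simp only [hRhat, hLx ht, hLBu]
  have hIcc : uIcc 0 T ⊆ Ici 0 := by rw [uIcc_of_le hT]; exact Icc_subset_Ici_self
  refine ⟨u, x, hu, hub, hx.1, hx.2, hR.congr (hRx.symm.mono (uIoc_subset_uIcc.trans hIcc)), ?_⟩
  rw [hFhat, show aggL π *ᵥ x T = zhat T from hLx hT,
    intervalIntegral.integral_congr (hRx.mono hIcc)]

end CostSets

theorem value_function_inf_preserved_general {N n K : ℕ} (π : Fin N → Fin n)
    (A : Matrix (Fin N) (Fin N) ℝ)
    (hCE : aggL π * A = aggL π * A * avgL π * aggL π)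
    (d : Fin K → Fin N)
    (B : Matrix (Fin N) (Fin K) ℝ)
    (hB : ∀ (j : Fin N) (l : Fin K), B j l = if j = d l then 1 else 0)
    (m M : Fin K → ℝ) (hmM : ∀ l, m l ≤ M l)
    (F : (Fin N → ℝ) → ℝ) (R : ℝ → (Fin N → ℝ) → (Fin K → ℝ) → ℝ)
    (Fhat : (Fin n → ℝ) → ℝ) (Rhat : ℝ → (Fin n → ℝ) → (Fin n → ℝ) → ℝ)
    (hFhat : ∀ x : Fin N → ℝ, F x = Fhat ((aggL π).mulVec x))
    (hRhat : ∀ (t : ℝ) (x : Fin N → ℝ) (v : Fin K → ℝ),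
      R t x v = Rhat t ((aggL π).mulVec x) ((aggL π * B).mulVec v))
    (x0 : Fin N → ℝ) (T : ℝ) (hT : 0 ≤ T) :
    sInf (costSet A B m M F R x0 T) =
      sInf (redCostSet (aggL π * A * avgL π) (redBound π d m) (redBound π d M)
        Fhat Rhat ((aggL π).mulVec x0) T) := by
  rw [(costSet_subset_redCostSet hCE hB hFhat hRhat x0 T).antisymm
    (redCostSet_subset_costSet hCE hB hmM hFhat hRhat x0 hT)]

/-- Theorem 2, forward direction for infima: under a control equivalence, the optimal (infimum) cost of the original system equals that of the reduced system. -/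
theorem value_function_inf_preserved {N n K : ℕ} (π : Fin N → Fin n)
    (hπ : Function.Surjective π) (A : Matrix (Fin N) (Fin N) ℝ)
    (hCE : aggL π * A = aggL π * A * avgL π * aggL π)
    (d : Fin K → Fin N) (hd : Function.Injective d)
    (B : Matrix (Fin N) (Fin K) ℝ)
    (hB : ∀ (j : Fin N) (l : Fin K), B j l = if j = d l then 1 else 0)
    (m M : Fin K → ℝ) (hmM : ∀ l, m l ≤ M l)
    (F : (Fin N → ℝ) → ℝ) (R : ℝ → (Fin N → ℝ) → (Fin K → ℝ) → ℝ)
    (Fhat : (Fin n → ℝ) → ℝ) (Rhat : ℝ → (Fin n → ℝ) → (Fin n → ℝ) → ℝ)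
    (hFhat : ∀ x : Fin N → ℝ, F x = Fhat ((aggL π).mulVec x))
    (hRhat : ∀ (t : ℝ) (x : Fin N → ℝ) (v : Fin K → ℝ),
      R t x v = Rhat t ((aggL π).mulVec x) ((aggL π * B).mulVec v))
    (x0 : Fin N → ℝ) (T : ℝ) (hT : 0 ≤ T) :
    sInf (costSet A B m M F R x0 T) =
      sInf (redCostSet (aggL π * A * avgL π) (redBound π d m) (redBound π d M)
        Fhat Rhat ((aggL π).mulVec x0) T) :=
  value_function_inf_preserved_general π A hCE d B hB m M hmM F R Fhat Rhat hFhat hRhat x0 T hT
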